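/- Let G be a finite group with subgroups A and B such that G = AB, and let K be a subgroup of B. If A permutes with K^b for all b ∈ B, then A^x permutes with K for all x ∈ G. -/

import Mathlib

open Subgroup Pointwise

variable {G : Type*}

/-- The conjugate subgroup `K ^ x = x⁻¹ K x`. -/
def sconj [Group G] (x : G) (K : Subgroup G) : Subgroup G :=
  K.map (MulAut.conj x⁻¹).toMonoidHom

/-- Two subgroups permute if `AB = BA` as subsets. -/
def permutes [Group G] (A B : Subgroup G) : Prop :=
  (A : Set G) * (B : Set G) = (B : Set G) * (A : Set G)

/-- `H/K` is a chief factor of `G`. -/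
def IsChiefFactor [Group G] (K H : Subgroup G) : Prop :=
  K.Normal ∧ H.Normal ∧ K < H ∧ ∀ N : Subgroup G, N.Normal → K < N → N ≤ H → N = H

/-- The factor `H/K` is cyclic (generated by a single coset). -/
def CyclicFactor [Group G] (K H : Subgroup G) : Prop :=
  ∃ g ∈ H, ∀ h ∈ H, ∃ n : ℤ, (g ^ n)⁻¹ * h ∈ K

/-- A group is `p`-soluble if every chief factor is a `p`-group or a `p'`-group. -/
def pSoluble (p : ℕ) (X : Type*) [Group X] : Prop :=
  ∀ K H : Subgroup X, IsChiefFactor K H →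
    (∃ n : ℕ, (K.subgroupOf H).index = p ^ n) ∨ ¬ p ∣ (K.subgroupOf H).index

/-- `p`-supersoluble: `p`-soluble and chief factors of order divisible by `p` have order `p`. -/
def pSupersoluble (p : ℕ) (X : Type*) [Group X] : Prop :=
  pSoluble p X ∧ ∀ K H : Subgroup X, IsChiefFactor K H →
    p ∣ (K.subgroupOf H).index → (K.subgroupOf H).index = p

/-- A Hall `s`-subgroup: its order involves only primes in `s`, its index none. -/
def IsHallSigmaSubgroup {X : Type*} [Group X] (s : Set ℕ) (H : Subgroup X) : Prop :=
  (∀ q : ℕ, q.Prime → q ∣ Nat.card H → q ∈ s) ∧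
    ∀ q : ℕ, q.Prime → q ∣ H.index → q ∉ s

/-- `σ` is a partition of the set of all primes. -/
def IsPrimePartition {ι : Type*} (σ : ι → Set ℕ) : Prop :=
  (∀ i, ∀ q ∈ σ i, Nat.Prime q) ∧ ∀ q : ℕ, q.Prime → ∃! i, q ∈ σ i

/-- `ℋ` (with labelling `j`) is a complete Hall `σ`-set. -/
def IsCompleteHallSigmaSet {X : Type*} [Group X] {ι : Type*} (σ : ι → Set ℕ)
    {t : ℕ} (ℋ : Fin t → Subgroup X) (j : Fin t → ι) : Prop :=
  Function.Injective j ∧ (∀ i, IsHallSigmaSubgroup (σ (j i)) (ℋ i)) ∧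
    ∀ a : ι, (∃ q : ℕ, q.Prime ∧ q ∈ σ a ∧ q ∣ Nat.card X) → ∃ i, j i = a

/-- `H` is σ-semipermutable with respect to `ℋ`. -/
def SigmaSemipermutable {X : Type*} [Group X] {t : ℕ} (H : Subgroup X)
    (ℋ : Fin t → Subgroup X) : Prop :=
  ∀ i : Fin t, Nat.Coprime (Nat.card H) (Nat.card (ℋ i)) →
    ∀ x : X, permutes H (sconj x (ℋ i))

/-- `E/O ≤ Z_∞(G/O)`: there is an ascending chain from `O` which is central over `O`
and covers `E`. -/
def LeHypercenterOver [Group G] (O E : Subgroup G) : Prop :=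
  ∃ n : ℕ, ∃ Z : ℕ → Subgroup G, Z 0 = O ∧ E ≤ Z n ∧
    ∀ i < n, Z i ≤ Z (i + 1) ∧ ∀ z ∈ Z (i + 1), ∀ g : G, z * g * z⁻¹ * g⁻¹ ∈ Z i

/-- `p`-nilpotent: has a normal `p`-complement. -/
def pNilpotent (p : ℕ) (X : Type*) [Group X] : Prop :=
  ∃ N : Subgroup X, N.Normal ∧ ¬ p ∣ Nat.card N ∧
    ∀ q : ℕ, q.Prime → q ∣ N.index → q = p

/-- `O_{p'}(E)`, the largest normal `p'`-subgroup of `E`, as a subgroup of `G`. -/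
def OpPrime (p : ℕ) [Group G] (E : Subgroup G) : Subgroup G :=
  ⨆ N ∈ {N : Subgroup G | N ≤ E ∧ (N.subgroupOf E).Normal ∧ ¬ p ∣ Nat.card N}, N

/-- `O_π(X)`, the largest normal `π`-subgroup. -/
def Oset (π : Set ℕ) (X : Type*) [Group X] : Subgroup X :=
  ⨆ N ∈ {N : Subgroup X | N.Normal ∧ ∀ q : ℕ, q.Prime → q ∣ Nat.card N → q ∈ π}, N

/-- The Fitting subgroup: join of all normal nilpotent subgroups. -/
def FittingSub (X : Type*) [Group X] : Subgroup X :=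
  ⨆ N ∈ {N : Subgroup X | N.Normal ∧ Group.IsNilpotent N}, N

/-- `G/C` is strictly `p`-closed (stated internally in `G`, over the subgroup `C`). -/
def StrictlyPClosedOver [Group G] (p : ℕ) (C : Subgroup G) : Prop :=
  ∃ S : Subgroup G, C ≤ S ∧ S.Normal ∧ (∀ s ∈ S, ∃ n : ℕ, s ^ p ^ n ∈ C) ∧
    ¬ p ∣ S.index ∧ (∀ a b : G, a * b * a⁻¹ * b⁻¹ ∈ S) ∧ ∀ a : G, a ^ (p - 1) ∈ S


section Conjugation

variable [Group G]

lemma sconj_eq_smul (x : G) (K : Subgroup G) : sconj x K = MulAut.conj x⁻¹ • K :=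
  rfl

lemma sconj_sconj (a b : G) (K : Subgroup G) : sconj a (sconj b K) = sconj (b * a) K := by
  simp only [sconj_eq_smul, smul_smul, mul_inv_rev, map_mul]

lemma sconj_one (K : Subgroup G) : sconj 1 K = K := by
  rw [sconj_eq_smul, inv_one, map_one, one_smul]

lemma sconj_eq_self_of_mem {a : G} {A : Subgroup G} (ha : a ∈ A) : sconj a A = A :=
  Subgroup.conj_smul_eq_self_of_mem (A.inv_mem ha)

lemma permutes.sconj {A K : Subgroup G} (g : G) (h : permutes A K) :
    permutes (sconj g A) (sconj g K) := by
  unfold permutes at *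
  simp only [sconj_eq_smul, Subgroup.coe_pointwise_smul, ← MulDistribMulAction.smul_mul, h]

end Conjugation

theorem stmt1_general [Group G] (A B K : Subgroup G)
    (hG : (A : Set G) * (B : Set G) = Set.univ)
    (h : ∀ b ∈ B, permutes A (sconj b K)) :
    ∀ x : G, permutes (sconj x A) K := by
  intro x
  obtain ⟨a, ha, b, hb, rfl⟩ : x ∈ (A : Set G) * (B : Set G) := hG ▸ Set.mem_univ x
  have hAbK : permutes (sconj b A) K := by
    simpa only [sconj_sconj, inv_mul_cancel, sconj_one] using (h b⁻¹ (B.inv_mem hb)).sconj b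
  rwa [← sconj_sconj, sconj_eq_self_of_mem ha]

/-- If `G = AB`, `K ≤ B` and `A` permutes with `K^b` for all `b ∈ B`,
then `A^x` permutes with `K` for all `x ∈ G`. -/
theorem stmt1 [Group G] [Finite G] (A B K : Subgroup G)
    (hG : (A : Set G) * (B : Set G) = Set.univ) (hKB : K ≤ B)
    (h : ∀ b ∈ B, permutes A (sconj b K)) :
    ∀ x : G, permutes (sconj x A) K :=
  stmt1_general A B K hG h
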